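/- arXiv:1810.04524 — 5 statements merged into one kernel-verified Lean document; each statement's English description precedes it below -/
import Mathlib

section
/- For all real numbers x, y with x ≥ y > 0, one has (e^{xy} - 1)^2 ≤ (e^{x^2} - 1)(e^{y^2} - 1). -/
/-! The coefficients of `e^{xy} - 1 = ∑_{n ≥ 1} (xy)^n / n!` are the geometric means of those of
`e^{x²} - 1` and `e^{y²} - 1`, so the inequality is Cauchy–Schwarz for series. -/

open Finset Nat

theorem HasSum.sq_le_mul_of_sq_le_mul {ι : Type*} {r f g : ι → ℝ} {a b c : ℝ}
    (hr : HasSum r a) (hf : HasSum f b) (hg : HasSum g c)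
    (hf0 : ∀ i, 0 ≤ f i) (hg0 : ∀ i, 0 ≤ g i) (hrfg : ∀ i, r i ^ 2 ≤ f i * g i) :
    a ^ 2 ≤ b * c := by
  have hb : 0 ≤ b := hasSum_le hf0 hasSum_zero hf
  refine le_of_tendsto' (hr.pow 2) fun s => ?_
  calc (∑ i ∈ s, r i) ^ 2 ≤ (∑ i ∈ s, f i) * ∑ i ∈ s, g i :=
        sum_sq_le_sum_mul_sum_of_sq_le_mul s (fun i _ => hf0 i) (fun i _ => hg0 i)
          fun i _ => hrfg i
    _ ≤ b * c :=
        mul_le_mul (sum_le_hasSum s (fun i _ => hf0 i) hf) (sum_le_hasSum s (fun i _ => hg0 i) hg)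
          (sum_nonneg fun i _ => hg0 i) hb

theorem Real.hasSum_exp_sub_one (t : ℝ) :
    HasSum (fun n : ℕ => t ^ (n + 1) / (n + 1)!) (Real.exp t - 1) := by
  have hexp : HasSum (fun n : ℕ => t ^ n / n !) (Real.exp t) := by
    simpa only [← Real.exp_eq_exp_ℝ] using NormedSpace.expSeries_div_hasSum_exp t
  simpa using (hasSum_nat_add_iff' 1).mpr hexp

theorem stmt_0_general (x y : ℝ) :
    (Real.exp (x * y) - 1) ^ 2 ≤ (Real.exp (x ^ 2) - 1) * (Real.exp (y ^ 2) - 1) :=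
  (Real.hasSum_exp_sub_one (x * y)).sq_le_mul_of_sq_le_mul (Real.hasSum_exp_sub_one _)
    (Real.hasSum_exp_sub_one _) (fun _ => by positivity) (fun _ => by positivity)
    fun _ => le_of_eq (by ring)

theorem stmt_0 (x y : ℝ) (hxy : x ≥ y) (hy : y > 0) :
    (Real.exp (x * y) - 1) ^ 2 ≤ (Real.exp (x ^ 2) - 1) * (Real.exp (y ^ 2) - 1) :=
  stmt_0_general x y
end

section
/- The function h̃(t) = t(e^t - 1)/(e^t - 1 - t) is strictly increasing on (0, ∞). -/
open Real Set

lemma key_ineq (t : ℝ) (ht : 0 < t) : t ^ 2 * Real.exp t < (Real.exp t - 1) ^ 2 := by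
  have h1 : t / 2 < Real.sinh (t / 2) := Real.self_lt_sinh_iff.mpr (by linarith)
  rw [Real.sinh_eq] at h1
  have hE : (0 : ℝ) < Real.exp (t / 2) := Real.exp_pos _
  have e1 : Real.exp (t / 2) * Real.exp (t / 2) = Real.exp t := by
    rw [← Real.exp_add]; ring_nf
  have e2 : Real.exp (-(t / 2)) * Real.exp (t / 2) = 1 := by
    rw [← Real.exp_add]; simp
  have h3 : t * Real.exp (t / 2) < Real.exp t - 1 := by nlinarith
  have hpos : 0 < t * Real.exp (t / 2) := mul_pos ht hE
  nlinarith [sq_nonneg (t * Real.exp (t / 2))]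

theorem stmt_5 :
    StrictMonoOn (fun t : ℝ => t * (Real.exp t - 1) / (Real.exp t - 1 - t))
      (Set.Ioi 0) := by
  have hD : ∀ t : ℝ, 0 < t → 0 < Real.exp t - 1 - t := by
    intro t ht
    nlinarith [Real.add_one_lt_exp (ne_of_gt ht)]
  have hE : ∀ t : ℝ, 0 < t → 0 < Real.exp t - 1 := by
    intro t ht; nlinarith [hD t ht]
  set g := fun t : ℝ => t⁻¹ - (Real.exp t - 1)⁻¹ with hgdef
  have hgderiv : ∀ t : ℝ, 0 < t →
      HasDerivAt g (-(t ^ 2)⁻¹ - (-(Real.exp t) / (Real.exp t - 1) ^ 2)) t := by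
    intro t ht
    have h1 : HasDerivAt (fun s : ℝ => s⁻¹) (-(t ^ 2)⁻¹) t := hasDerivAt_inv (ne_of_gt ht)
    have h2 : HasDerivAt (fun s : ℝ => Real.exp s - 1) (Real.exp t) t :=
      (Real.hasDerivAt_exp t).sub_const 1
    exact h1.sub (h2.inv (ne_of_gt (hE t ht)))
  have hganti : StrictAntiOn g (Ioi 0) := by
    apply strictAntiOn_of_deriv_neg (convex_Ioi 0)
    · intro t ht
      exact ((hgderiv t ht).continuousAt).continuousWithinAt
    · intro t ht
      rw [interior_Ioi] at ht
      rw [(hgderiv t ht).deriv]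
      have hk := key_ineq t ht
      have ht2 : (0 : ℝ) < t ^ 2 := pow_pos ht 2
      have hE2 : (0 : ℝ) < (Real.exp t - 1) ^ 2 := pow_pos (hE t ht) 2
      have : Real.exp t / (Real.exp t - 1) ^ 2 < 1 / t ^ 2 := by
        rw [div_lt_div_iff₀ hE2 ht2]; nlinarith
      rw [one_div] at this
      have hexp := Real.exp_pos t
      have : -(Real.exp t) / (Real.exp t - 1) ^ 2 = -(Real.exp t / (Real.exp t - 1) ^ 2) := by
        ring
      rw [this]
      nlinarith [div_pos hexp hE2]
  have hgpos : ∀ t : ℝ, 0 < t → 0 < g t := by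
    intro t ht
    have h1 : (Real.exp t - 1)⁻¹ < t⁻¹ := by
      apply inv_strictAnti₀ ht
      nlinarith [hD t ht]
    simpa [hgdef] using sub_pos.mpr h1
  have hf : ∀ t : ℝ, 0 < t →
      t * (Real.exp t - 1) / (Real.exp t - 1 - t) = (g t)⁻¹ := by
    intro t ht
    have h1 := hD t ht
    have h2 := hE t ht
    have h3 := hgpos t ht
    simp only [hgdef]
    rw [eq_comm, inv_eq_iff_eq_inv, eq_comm]
    field_simp
  intro x hx y hy hxy
  simp only [Set.mem_Ioi] at hx hy
  simp only []
  rw [hf x hx, hf y hy]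
  exact inv_strictAnti₀ (hgpos y hy) (hganti hx hy hxy)
end

section
/- Let μ₁, μ₂ > 0 and β > 0, and define H(x,y) = (μ₁/2)(e^{x²} - 1 - x²) + (μ₂/2)(e^{y²} - 1 - y²) + β(e^{|xy|} - 1 - |xy|). Then for every (x,y) ∈ ℝ² \ {(0,0)}, x·∂H/∂x(x,y) + y·∂H/∂y(x,y) ≥ 4 H(x,y) > 0. -/
/-!
Writing `φ t = eᵗ - 1 - t`, the three summands of `H` are `φ` evaluated at `x²`, `y²` and `|xy|`,
while the left-hand side is the corresponding sum of `t (eᵗ - 1) = t φ'(t)`. So everything reduces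
to the one-variable Ambrosetti–Rabinowitz inequality `2 φ(t) ≤ t φ'(t)` for `t ≥ 0`: the
difference `t (eᵗ - 1) - 2 φ(t)` vanishes at `0` and has derivative `(t - 1) eᵗ + 1 ≥ 0`.
Positivity of `H` comes from `φ(t) > 0` for `t ≠ 0`.
-/

open Real

lemma sub_one_mul_exp_add_one_nonneg (s : ℝ) : 0 ≤ (s - 1) * exp s + 1 := by
  have h := mul_le_mul_of_nonneg_right (one_sub_le_exp_neg s) (exp_pos s).le
  rw [← exp_add, neg_add_cancel, exp_zero] at h
  linarith

lemma two_mul_exp_sub_one_sub_le {t : ℝ} (ht : 0 ≤ t) :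
    2 * (exp t - 1 - t) ≤ t * (exp t - 1) := by
  set f : ℝ → ℝ := fun u ↦ u * (exp u - 1) - 2 * (exp u - 1 - u)
  have hf : ∀ s, HasDerivAt f ((s - 1) * exp s + 1) s := fun s ↦ by
    have := ((hasDerivAt_id s).mul ((hasDerivAt_exp s).sub_const 1)).sub
      ((((hasDerivAt_exp s).sub_const 1).sub (hasDerivAt_id s)).const_mul 2)
    exact this.congr_deriv (by simp only [id]; ring)
  have hmono : Monotone f := monotone_of_deriv_nonneg (fun s ↦ (hf s).differentiableAt)
    fun s ↦ (hf s).deriv ▸ sub_one_mul_exp_add_one_nonneg s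
  have := hmono ht
  simp only [f, exp_zero] at this
  linarith

theorem stmt_6 (μ₁ μ₂ β : ℝ) (hμ₁ : 0 < μ₁) (hμ₂ : 0 < μ₂) (hβ : 0 < β)
    (H : ℝ → ℝ → ℝ)
    (hH : ∀ x y : ℝ, H x y =
      μ₁ / 2 * (Real.exp (x ^ 2) - 1 - x ^ 2) +
      μ₂ / 2 * (Real.exp (y ^ 2) - 1 - y ^ 2) +
      β * (Real.exp |x * y| - 1 - |x * y|))
    (x y : ℝ) (hxy : (x, y) ≠ (0, 0)) :
    (μ₁ * x ^ 2 * (Real.exp (x ^ 2) - 1) + β * |x * y| * (Real.exp |x * y| - 1)) +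
      (μ₂ * y ^ 2 * (Real.exp (y ^ 2) - 1) + β * |x * y| * (Real.exp |x * y| - 1)) ≥
        4 * H x y ∧ 0 < H x y := by
  rw [hH]
  constructor
  · linear_combination μ₁ * two_mul_exp_sub_one_sub_le (sq_nonneg x) +
      μ₂ * two_mul_exp_sub_one_sub_le (sq_nonneg y) +
      2 * β * two_mul_exp_sub_one_sub_le (abs_nonneg (x * y))
  · have hφx : 0 ≤ exp (x ^ 2) - 1 - x ^ 2 := by linarith [add_one_le_exp (x ^ 2)]
    have hφy : 0 ≤ exp (y ^ 2) - 1 - y ^ 2 := by linarith [add_one_le_exp (y ^ 2)]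
    have hφxy : 0 ≤ exp |x * y| - 1 - |x * y| := by linarith [add_one_le_exp |x * y|]
    have hsq : x ^ 2 ≠ 0 ∨ y ^ 2 ≠ 0 := by
      by_contra! h
      exact hxy (by simp_all)
    rcases hsq with hx | hy
    · have := add_one_lt_exp hx
      nlinarith
    · have := add_one_lt_exp hy
      nlinarith
end

section
/- Let Ω ⊂ ℝ² be a measurable set and u, v : Ω → ℝ be measurable functions such that the integrals ∫_Ω (e^{u²} - 1 - u²) and ∫_Ω (e^{v²} - 1 - v²) are finite. Then 0 ≤ ∫_Ω (e^{|uv|} - 1 - |uv|) ≤ (∫_Ω (e^{u²} - 1 - u²))^{1/2} · (∫_Ω (e^{v²} - 1 - v²))^{1/2}. -/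
/-! Expanding `φ(t) = exp t - 1 - t = ∑_{k ≥ 2} t^k / k!`, each term of `φ(ab)` is the geometric
mean of the corresponding terms of `φ(a²)` and `φ(b²)`, so Cauchy–Schwarz for series gives
`φ(|uv|) ≤ √φ(u²) · √φ(v²)` pointwise. Integrating and applying Cauchy–Schwarz for integrals to
`√φ(u²)` and `√φ(v²)`, both in `L²`, gives the bound. -/

open MeasureTheory

lemma le_sqrt_mul_sqrt_of_hasSum {ι : Type*} {f g : ι → ℝ} {a b c : ℝ}
    (hf0 : ∀ i, 0 ≤ f i) (hg0 : ∀ i, 0 ≤ g i) (hf : HasSum f a) (hg : HasSum g b)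
    (hfg : HasSum (fun i => √(f i) * √(g i)) c) : c ≤ √a * √b := by
  refine hasSum_le_of_sum_le hfg fun s => ?_
  calc ∑ i ∈ s, √(f i) * √(g i) ≤ √(∑ i ∈ s, f i) * √(∑ i ∈ s, g i) :=
        Real.sum_sqrt_mul_sqrt_le s hf0 hg0
    _ ≤ √a * √b := by
        gcongr
        · exact sum_le_hasSum s (fun i _ => hf0 i) hf
        · exact sum_le_hasSum s (fun i _ => hg0 i) hg

namespace Real

lemma exp_sub_one_sub_nonneg (t : ℝ) : 0 ≤ exp t - 1 - t := by
  linarith [add_one_le_exp t]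

lemma hasSum_exp_sub_one_sub (t : ℝ) :
    HasSum (fun n : ℕ => t ^ (n + 2) / (n + 2).factorial) (exp t - 1 - t) := by
  have h := (hasSum_nat_add_iff' 2).2 (NormedSpace.expSeries_div_hasSum_exp t)
  simpa [← exp_eq_exp_ℝ, Finset.sum_range_succ, sub_sub] using h

lemma exp_mul_sub_one_sub_le {a b : ℝ} (ha : 0 ≤ a) (hb : 0 ≤ b) :
    exp (a * b) - 1 - a * b ≤ √(exp (a ^ 2) - 1 - a ^ 2) * √(exp (b ^ 2) - 1 - b ^ 2) := by
  refine le_sqrt_mul_sqrt_of_hasSum (fun n => by positivity) (fun n => by positivity)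
    (hasSum_exp_sub_one_sub _) (hasSum_exp_sub_one_sub _) ?_
  convert hasSum_exp_sub_one_sub (a * b) using 2 with n
  rw [← sqrt_mul (by positivity),
    ← sqrt_sq (by positivity : 0 ≤ (a * b) ^ (n + 2) / (n + 2).factorial)]
  congr 1
  ring

end Real

namespace MeasureTheory

variable {α : Type*} [MeasurableSpace α] {μ : Measure α} {f g : α → ℝ}

lemma Integrable.memLp_two_sqrt (hf : Integrable f μ) (hf0 : 0 ≤ᵐ[μ] f) :
    MemLp (fun x => √(f x)) 2 μ := by
  rw [memLp_two_iff_integrable_sq (Real.continuous_sqrt.comp_aestronglyMeasurable hf.1)]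
  refine hf.congr ?_
  filter_upwards [hf0] with x hx
  exact (Real.sq_sqrt hx).symm

lemma integral_sqrt_mul_sqrt_le (hf : Integrable f μ) (hg : Integrable g μ)
    (hf0 : 0 ≤ᵐ[μ] f) (hg0 : 0 ≤ᵐ[μ] g) :
    ∫ x, √(f x) * √(g x) ∂μ ≤ √(∫ x, f x ∂μ) * √(∫ x, g x ∂μ) := by
  have h := integral_mul_le_Lp_mul_Lq_of_nonneg Real.HolderConjugate.two_two
    (.of_forall fun x => Real.sqrt_nonneg (f x)) (.of_forall fun x => Real.sqrt_nonneg (g x))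
    (by simpa using hf.memLp_two_sqrt hf0) (by simpa using hg.memLp_two_sqrt hg0)
  have hsq : ∀ {h : α → ℝ}, 0 ≤ᵐ[μ] h → ∫ x, √(h x) ^ (2 : ℝ) ∂μ = ∫ x, h x ∂μ := fun hh0 =>
    integral_congr_ae <| by filter_upwards [hh0] with x hx using by simp [Real.sq_sqrt hx]
  rwa [hsq hf0, hsq hg0, ← Real.sqrt_eq_rpow, ← Real.sqrt_eq_rpow] at h

end MeasureTheory

theorem stmt_13_general (Ω : Set (ℝ × ℝ))
    (u v : ℝ × ℝ → ℝ) (hu : Measurable u) (hv : Measurable v)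
    (hiu : IntegrableOn (fun x => Real.exp ((u x) ^ 2) - 1 - (u x) ^ 2) Ω)
    (hiv : IntegrableOn (fun x => Real.exp ((v x) ^ 2) - 1 - (v x) ^ 2) Ω) :
    0 ≤ ∫ x in Ω, (Real.exp |u x * v x| - 1 - |u x * v x|) ∧
    ∫ x in Ω, (Real.exp |u x * v x| - 1 - |u x * v x|) ≤
      Real.sqrt (∫ x in Ω, (Real.exp ((u x) ^ 2) - 1 - (u x) ^ 2)) *
      Real.sqrt (∫ x in Ω, (Real.exp ((v x) ^ 2) - 1 - (v x) ^ 2)) := by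
  have hnonneg (t : ℝ) := Real.exp_sub_one_sub_nonneg t
  have hpointwise (x : ℝ × ℝ) : Real.exp |u x * v x| - 1 - |u x * v x| ≤
      √(Real.exp (u x ^ 2) - 1 - u x ^ 2) * √(Real.exp (v x ^ 2) - 1 - v x ^ 2) := by
    simpa only [abs_mul, sq_abs] using
      Real.exp_mul_sub_one_sub_le (abs_nonneg (u x)) (abs_nonneg (v x))
  have hbound : IntegrableOn (fun x => √(Real.exp (u x ^ 2) - 1 - u x ^ 2) *
      √(Real.exp (v x ^ 2) - 1 - v x ^ 2)) Ω :=
    (hiu.memLp_two_sqrt (.of_forall fun _ => hnonneg _)).integrable_mul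
      (hiv.memLp_two_sqrt (.of_forall fun _ => hnonneg _))
  have hint : IntegrableOn (fun x => Real.exp |u x * v x| - 1 - |u x * v x|) Ω :=
    hbound.mono' (by fun_prop) (.of_forall fun x => by
      rw [Real.norm_of_nonneg (hnonneg _)]; exact hpointwise x)
  refine ⟨integral_nonneg fun x => hnonneg _, ?_⟩
  calc _ ≤ _ := integral_mono hint hbound hpointwise
    _ ≤ _ := integral_sqrt_mul_sqrt_le hiu hiv (.of_forall fun _ => hnonneg _)
        (.of_forall fun _ => hnonneg _)

theorem stmt_13 (Ω : Set (ℝ × ℝ)) (hΩ : MeasurableSet Ω)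
    (u v : ℝ × ℝ → ℝ) (hu : Measurable u) (hv : Measurable v)
    (hiu : IntegrableOn (fun x => Real.exp ((u x) ^ 2) - 1 - (u x) ^ 2) Ω)
    (hiv : IntegrableOn (fun x => Real.exp ((v x) ^ 2) - 1 - (v x) ^ 2) Ω) :
    0 ≤ ∫ x in Ω, (Real.exp |u x * v x| - 1 - |u x * v x|) ∧
    ∫ x in Ω, (Real.exp |u x * v x| - 1 - |u x * v x|) ≤
      Real.sqrt (∫ x in Ω, (Real.exp ((u x) ^ 2) - 1 - (u x) ^ 2)) *
      Real.sqrt (∫ x in Ω, (Real.exp ((v x) ^ 2) - 1 - (v x) ^ 2)) :=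
  stmt_13_general Ω u v hu hv hiu hiv
end

section
/- For measurable functions u, v on a measurable set Ω ⊂ ℝ² with ∫_Ω u²(e^{u²} - 1) < ∞ and ∫_Ω v²(e^{v²} - 1) < ∞, one has ∫_Ω |uv|(e^{|uv|} - 1) ≤ (∫_Ω u²(e^{u²} - 1))^{1/2} (∫_Ω v²(e^{v²} - 1))^{1/2}. -/
/-! Termwise, `(xy)ⁿ/n!` is the geometric mean of `(x²)ⁿ/n!` and `(y²)ⁿ/n!`, so Cauchy–Schwarz for
series gives `e^{xy} - 1 ≤ (e^{x²} - 1)^{1/2} (e^{y²} - 1)^{1/2}` for `x, y ≥ 0`. Hence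
`|uv|(e^{|uv|} - 1) ≤ F(u) F(v)` pointwise with `F(w) = (w²(e^{w²} - 1))^{1/2}`, and Cauchy–Schwarz
for integrals concludes. -/

open MeasureTheory

theorem Real.sqrt_mul_sqrt_le_add_div_two {x y : ℝ} (hx : 0 ≤ x) (hy : 0 ≤ y) :
    √x * √y ≤ (x + y) / 2 := by
  have := two_mul_le_add_sq √x √y
  rw [Real.sq_sqrt hx, Real.sq_sqrt hy] at this
  linarith

theorem Real.tsum_sqrt_mul_sqrt_le {ι : Type*} {f g : ι → ℝ} (hf : ∀ i, 0 ≤ f i)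
    (hg : ∀ i, 0 ≤ g i) (hfs : Summable f) (hgs : Summable g) :
    ∑' i, √(f i) * √(g i) ≤ √(∑' i, f i) * √(∑' i, g i) := by
  have hs : Summable fun i => √(f i) * √(g i) :=
    ((hfs.add hgs).div_const 2).of_nonneg_of_le (fun i => by positivity)
      fun i => Real.sqrt_mul_sqrt_le_add_div_two (hf i) (hg i)
  refine hs.tsum_le_of_sum_le fun s => ?_
  calc ∑ i ∈ s, √(f i) * √(g i) ≤ √(∑ i ∈ s, f i) * √(∑ i ∈ s, g i) :=
        Real.sum_sqrt_mul_sqrt_le s (fun i => hf i) (fun i => hg i)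
    _ ≤ √(∑' i, f i) * √(∑' i, g i) := by
        gcongr
        · exact hfs.sum_le_tsum s fun i _ => hf i
        · exact hgs.sum_le_tsum s fun i _ => hg i

section Integral

variable {α : Type*} [MeasurableSpace α] {μ : Measure α} {f g : α → ℝ}

theorem MeasureTheory.Integrable.sqrt_mul_sqrt (hf : Integrable f μ) (hg : Integrable g μ)
    (hf₀ : 0 ≤ᵐ[μ] f) (hg₀ : 0 ≤ᵐ[μ] g) : Integrable (fun x => √(f x) * √(g x)) μ := by
  refine ((hf.add hg).div_const 2).mono' ?_ ?_
  · exact (Real.continuous_sqrt.comp_aestronglyMeasurable hf.aestronglyMeasurable).mul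
      (Real.continuous_sqrt.comp_aestronglyMeasurable hg.aestronglyMeasurable)
  · filter_upwards [hf₀, hg₀] with x hfx hgx
    rw [Real.norm_of_nonneg (by positivity)]
    exact Real.sqrt_mul_sqrt_le_add_div_two hfx hgx

theorem MeasureTheory.integral_sqrt_mul_sqrt_le_s17 (hf : Integrable f μ) (hg : Integrable g μ)
    (hf₀ : 0 ≤ᵐ[μ] f) (hg₀ : 0 ≤ᵐ[μ] g) :
    ∫ x, √(f x) * √(g x) ∂μ ≤ √(∫ x, f x ∂μ) * √(∫ x, g x ∂μ) := by
  have sq_sqrt_ae : ∀ {h : α → ℝ}, 0 ≤ᵐ[μ] h → (fun x => √(h x) ^ (2 : ℝ)) =ᵐ[μ] h :=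
    fun h₀ => h₀.mono fun x (hx : 0 ≤ _) => by simp only [Real.rpow_two, Real.sq_sqrt hx]
  have memLp_sqrt : ∀ {h : α → ℝ}, Integrable h μ → 0 ≤ᵐ[μ] h →
      MemLp (fun x => √(h x)) (ENNReal.ofReal 2) μ := fun hi h₀ => by
    rw [ENNReal.ofReal_ofNat, memLp_two_iff_integrable_sq
      (Real.continuous_sqrt.comp_aestronglyMeasurable hi.aestronglyMeasurable)]
    exact hi.congr (h₀.mono fun x (hx : 0 ≤ _) => (Real.sq_sqrt hx).symm)
  have holder := integral_mul_le_Lp_mul_Lq_of_nonneg Real.HolderConjugate.two_two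
    (Filter.Eventually.of_forall fun x => Real.sqrt_nonneg (f x))
    (Filter.Eventually.of_forall fun x => Real.sqrt_nonneg (g x))
    (memLp_sqrt hf hf₀) (memLp_sqrt hg hg₀)
  rwa [integral_congr_ae (sq_sqrt_ae hf₀), integral_congr_ae (sq_sqrt_ae hg₀),
    ← Real.sqrt_eq_rpow, ← Real.sqrt_eq_rpow] at holder

end Integral

theorem Real.hasSum_pow_succ_div_factorial (x : ℝ) :
    HasSum (fun n : ℕ => x ^ (n + 1) / (n + 1).factorial) (Real.exp x - 1) := by
  simpa [← Real.exp_eq_exp_ℝ] using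
    (hasSum_nat_add_iff' 1).mpr (NormedSpace.expSeries_div_hasSum_exp x)

theorem Real.mul_exp_sub_one_nonneg (t : ℝ) : 0 ≤ t * (Real.exp t - 1) := by
  rcases le_total 0 t with ht | ht
  · exact mul_nonneg ht (sub_nonneg.2 (Real.one_le_exp ht))
  · exact mul_nonneg_of_nonpos_of_nonpos ht (sub_nonpos.2 (Real.exp_le_one_iff.2 ht))

theorem Real.exp_mul_sub_one_le_sqrt_mul_sqrt {a b : ℝ} (ha : 0 ≤ a) (hb : 0 ≤ b) :
    Real.exp (a * b) - 1 ≤ √(Real.exp (a ^ 2) - 1) * √(Real.exp (b ^ 2) - 1) := by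
  have hterm : ∀ n : ℕ, (a * b) ^ (n + 1) / (n + 1).factorial =
      √((a ^ 2) ^ (n + 1) / (n + 1).factorial) * √((b ^ 2) ^ (n + 1) / (n + 1).factorial) := by
    intro n
    rw [← Real.sqrt_mul (by positivity), ← Real.sqrt_sq (by positivity :
      0 ≤ (a * b) ^ (n + 1) / (n + 1).factorial)]
    congr 1
    ring
  have ha2 := Real.hasSum_pow_succ_div_factorial (a ^ 2)
  have hb2 := Real.hasSum_pow_succ_div_factorial (b ^ 2)
  calc Real.exp (a * b) - 1
      = ∑' n : ℕ, √((a ^ 2) ^ (n + 1) / (n + 1).factorial) *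
          √((b ^ 2) ^ (n + 1) / (n + 1).factorial) := by
        rw [← (Real.hasSum_pow_succ_div_factorial (a * b)).tsum_eq]
        exact tsum_congr hterm
    _ ≤ _ := by
        rw [← ha2.tsum_eq, ← hb2.tsum_eq]
        exact Real.tsum_sqrt_mul_sqrt_le (fun n => by positivity) (fun n => by positivity)
          ha2.summable hb2.summable

theorem Real.abs_mul_mul_exp_abs_sub_one_le (x y : ℝ) :
    |x * y| * (Real.exp |x * y| - 1) ≤
      √(x ^ 2 * (Real.exp (x ^ 2) - 1)) * √(y ^ 2 * (Real.exp (y ^ 2) - 1)) := by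
  have key := Real.exp_mul_sub_one_le_sqrt_mul_sqrt (abs_nonneg x) (abs_nonneg y)
  rw [sq_abs, sq_abs, ← abs_mul] at key
  rw [Real.sqrt_mul (sq_nonneg x), Real.sqrt_mul (sq_nonneg y), Real.sqrt_sq_eq_abs,
    Real.sqrt_sq_eq_abs, mul_mul_mul_comm, ← abs_mul]
  gcongr

theorem stmt_17_general (Ω : Set (ℝ × ℝ))
    (u v : ℝ × ℝ → ℝ)
    (hiu : IntegrableOn (fun x => (u x) ^ 2 * (Real.exp ((u x) ^ 2) - 1)) Ω)
    (hiv : IntegrableOn (fun x => (v x) ^ 2 * (Real.exp ((v x) ^ 2) - 1)) Ω) :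
    ∫ x in Ω, |u x * v x| * (Real.exp |u x * v x| - 1) ≤
      Real.sqrt (∫ x in Ω, (u x) ^ 2 * (Real.exp ((u x) ^ 2) - 1)) *
      Real.sqrt (∫ x in Ω, (v x) ^ 2 * (Real.exp ((v x) ^ 2) - 1)) := by
  have hu₀ : 0 ≤ᵐ[volume.restrict Ω] fun x => u x ^ 2 * (Real.exp (u x ^ 2) - 1) :=
    .of_forall fun x => Real.mul_exp_sub_one_nonneg (u x ^ 2)
  have hv₀ : 0 ≤ᵐ[volume.restrict Ω] fun x => v x ^ 2 * (Real.exp (v x ^ 2) - 1) :=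
    .of_forall fun x => Real.mul_exp_sub_one_nonneg (v x ^ 2)
  calc ∫ x in Ω, |u x * v x| * (Real.exp |u x * v x| - 1)
      ≤ ∫ x in Ω, √(u x ^ 2 * (Real.exp (u x ^ 2) - 1)) * √(v x ^ 2 * (Real.exp (v x ^ 2) - 1)) :=
        integral_mono_of_nonneg
          (Filter.Eventually.of_forall fun x => Real.mul_exp_sub_one_nonneg _)
          (hiu.sqrt_mul_sqrt hiv hu₀ hv₀)
          (Filter.Eventually.of_forall fun x => Real.abs_mul_mul_exp_abs_sub_one_le (u x) (v x))
    _ ≤ _ := integral_sqrt_mul_sqrt_le_s17 hiu hiv hu₀ hv₀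

theorem stmt_17 (Ω : Set (ℝ × ℝ)) (hΩ : MeasurableSet Ω)
    (u v : ℝ × ℝ → ℝ) (hu : Measurable u) (hv : Measurable v)
    (hiu : IntegrableOn (fun x => (u x) ^ 2 * (Real.exp ((u x) ^ 2) - 1)) Ω)
    (hiv : IntegrableOn (fun x => (v x) ^ 2 * (Real.exp ((v x) ^ 2) - 1)) Ω) :
    ∫ x in Ω, |u x * v x| * (Real.exp |u x * v x| - 1) ≤
      Real.sqrt (∫ x in Ω, (u x) ^ 2 * (Real.exp ((u x) ^ 2) - 1)) *
      Real.sqrt (∫ x in Ω, (v x) ^ 2 * (Real.exp ((v x) ^ 2) - 1)) :=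
  stmt_17_general Ω u v hiu hiv
end
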